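/- For every binary tree T of size n and every permutation σ of {1,…,n}: σ is a linear extension of inc(T) if and only if σ belongs to the sylvester class of some binary tree T' of size n with T' ≤ T in the Tamari order; and σ is a linear extension of dec(T) if and only if σ belongs to the sylvester class of some binary tree T' of size n with T' ≥ T in the Tamari order. -/

import Mathlib

/-- Planar binary trees: empty, or a node with a left and a right subtree. -/
inductive BinTree : Type where
  | leaf : BinTree
  | node : BinTree → BinTree → BinTree
  deriving DecidableEq

namespace BinTree

/-- Size: number of internal nodes. -/
def size : BinTree → ℕ
  | leaf => 0
  | node l r => l.size + r.size + 1

/-- `sub T o a b` : in the binary-search-tree labelling of `T` shifted by `o`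
(its labels are `o+1, …, o+T.size`), the node labelled `a` lies in the subtree
rooted at the node labelled `b`, i.e. `a ⊴_T b`. -/
def sub : BinTree → ℕ → ℕ → ℕ → Prop
  | leaf, _, _, _ => False
  | node l r, o, a, b =>
      (b = o + l.size + 1 ∧ o + 1 ≤ a ∧ a ≤ o + l.size + r.size + 1) ∨
      l.sub o a b ∨ r.sub (o + l.size + 1) a b

/-- One right rotation, applied at any position of the tree. -/
inductive Rot : BinTree → BinTree → Prop
  | base (A B C : BinTree) : Rot (node (node A B) C) (node A (node B C))
  | left {l l' : BinTree} (r : BinTree) : Rot l l' → Rot (node l r) (node l' r)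
  | right (l : BinTree) {r r' : BinTree} : Rot r r' → Rot (node l r) (node l r')

end BinTree

/-- Tamari order: reflexive-transitive closure of right rotation. -/
def tamariLE : BinTree → BinTree → Prop := Relation.ReflTransGen BinTree.Rot

/-- `incRel T a c` : `a` is below `c` in the initial forest `inc T`. -/
def incRel (T : BinTree) (a c : ℕ) : Prop := a < c ∧ T.sub 0 a c

/-- `decRel T c a` : `c` is below `a` in the final forest `dec T`. -/
def decRel (T : BinTree) (c a : ℕ) : Prop := a < c ∧ T.sub 0 c a

/-- `IsLinExt n r l` : the list `l` is a linear extension of the (strict or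
reflexive) relation `r` ("`x` below `y`") on `{1, …, n}` : it lists `1, …, n`
once each, and `a` appears before `b` whenever `a` is below `b` with `a ≠ b`. -/
def IsLinExt (n : ℕ) (r : ℕ → ℕ → Prop) (l : List ℕ) : Prop :=
  l.Nodup ∧ (∀ x, x ∈ l ↔ 1 ≤ x ∧ x ≤ n) ∧
    ∀ a b, r a b → a ≠ b → l.idxOf a < l.idxOf b

/-!
If `T' ≤ T` in the Tamari order, then `⊴_{T'}` contains every increasing pair of `⊴_T` and
`⊴_T` contains every decreasing pair of `⊴_{T'}`, since a right rotation only destroys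
increasing pairs and only creates decreasing ones; this gives the easy inclusions.

Conversely, let `σ` be a linear extension of `inc T`. Its last letter `m` has no larger
ancestor in `T`, so `m` lies on the right spine of `T`, and rotating `m` to the root by left
rotations yields a tree `m(L, U) ≤ T` whose ancestor relation agrees with that of `T` on the
labels below `m` and on the labels above `m`. By induction the letters of `σ` below (above)
`m` lie in the sylvester class of some `L' ≤ L` (`U' ≤ U`), and `σ` lies in that of
`m(L', U') ≤ T`. For `dec T` the last letter lies on the left spine and the rotations go
the other way.
-/

namespace List

variable {α : Type*}

theorem Nodup.idxOf_lt_idxOf_iff_sublist [DecidableEq α] {l : List α} {a b : α} (hl : l.Nodup)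
    (hb : b ∈ l) (hab : a ≠ b) : l.idxOf a < l.idxOf b ↔ [a, b] <+ l := by
  induction l with
  | nil => simp at hb
  | cons x t ih =>
    rw [nodup_cons] at hl
    by_cases hxa : x = a
    · subst hxa
      have hbt : b ∈ t := (mem_cons.1 hb).resolve_left hab.symm
      simpa [idxOf_cons_ne _ hab] using hbt
    by_cases hxb : x = b
    · subst hxb
      simp only [idxOf_cons_self, Nat.not_lt_zero, false_iff]
      exact fun h => hl.1 ((sublist_cons_iff.1 h).elim (fun h => h.subset (by simp))
        fun ⟨_, hr, _⟩ => absurd (cons.inj hr).1 hab)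
    have hbt : b ∈ t := (mem_cons.1 hb).resolve_left (Ne.symm hxb)
    simp [idxOf_cons_ne _ hxa, idxOf_cons_ne _ hxb, sublist_cons_iff, Ne.symm hxa, ih hl.2 hbt]

theorem not_pair_sublist_append_singleton {l : List α} {a b : α} (ha : a ∉ l) :
    ¬ [a, b] <+ l ++ [a] := by
  intro h
  have h' : [b, a] <+ a :: l.reverse := by simpa using h.reverse
  rcases sublist_cons_iff.1 h' with h' | ⟨r, hr, h'⟩
  · exact ha (mem_reverse.1 (h'.subset (by simp)))
  · obtain ⟨-, rfl⟩ := cons.inj hr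
    exact ha (mem_reverse.1 (h'.subset (by simp)))

end List

-- Linear extensions on the labels `o + 1, …, o + n` of `sub T o`; `[a, b].Sublist l` says that
-- `a` comes before `b` in `l`.
def IsLinExtOn (o n : ℕ) (r : ℕ → ℕ → Prop) (l : List ℕ) : Prop :=
  l.Nodup ∧ (∀ x, x ∈ l ↔ o < x ∧ x ≤ o + n) ∧ ∀ a b, r a b → a ≠ b → [a, b].Sublist l

theorem isLinExt_iff_isLinExtOn {n : ℕ} {r : ℕ → ℕ → Prop} {l : List ℕ}
    (hr : ∀ a b, r a b → 0 < b ∧ b ≤ n) : IsLinExt n r l ↔ IsLinExtOn 0 n r l := by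
  have hmem : ∀ x, (x ∈ l ↔ 1 ≤ x ∧ x ≤ n) ↔ (x ∈ l ↔ 0 < x ∧ x ≤ 0 + n) := by
    simp only [zero_add, Nat.one_le_iff_ne_zero, Nat.pos_iff_ne_zero, implies_true]
  unfold IsLinExt IsLinExtOn
  rw [forall_congr' hmem]
  refine and_congr_right fun hl => and_congr_right fun hmem' =>
    forall₄_congr fun a b hab hne => hl.idxOf_lt_idxOf_iff_sublist ?_ hne
  exact (hmem' b).2 (by simpa using hr a b hab)

theorem IsLinExt.mono {n : ℕ} {r r' : ℕ → ℕ → Prop} {l : List ℕ} (h : IsLinExt n r l)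
    (hr : ∀ a b, r' a b → r a b) : IsLinExt n r' l :=
  ⟨h.1, h.2.1, fun a b hab => h.2.2 a b (hr a b hab)⟩

theorem IsLinExtOn.filter {o n o' n' : ℕ} {r r' : ℕ → ℕ → Prop} {l : List ℕ}
    (h : IsLinExtOn o n r l) (p : ℕ → Bool)
    (hp : ∀ x, (o < x ∧ x ≤ o + n) ∧ p x ↔ o' < x ∧ x ≤ o' + n')
    (hr : ∀ a b, r' a b → r a b ∧ p a ∧ p b) : IsLinExtOn o' n' r' (l.filter p) := by
  refine ⟨h.1.filter p, fun x => by rw [List.mem_filter, h.2.1, hp], fun a b hab hne => ?_⟩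
  obtain ⟨hab, ha, hb⟩ := hr a b hab
  simpa [ha, hb] using (h.2.2 a b hab hne).filter p

namespace BinTree

theorem sub_bounds {T : BinTree} {o a b : ℕ} (h : T.sub o a b) :
    o < a ∧ a ≤ o + T.size ∧ o < b ∧ b ≤ o + T.size := by
  induction T generalizing o with
  | leaf => exact h.elim
  | node l r ihl ihr =>
    simp only [size]
    rcases h with h | h | h
    · omega
    · have := ihl h; omega
    · have := ihr h; omega

theorem Rot.size_eq {t₁ t₂ : BinTree} (h : Rot t₁ t₂) : t₁.size = t₂.size := by
  induction h <;> simp only [size] <;> omega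

theorem tamariLE_node {l l' r r' : BinTree} (hl : tamariLE l l') (hr : tamariLE r r') :
    tamariLE (node l r) (node l' r') :=
  (Relation.ReflTransGen.lift (node · r) (fun _ _ => Rot.left r) _ _ hl).trans
    (Relation.ReflTransGen.lift (node l' ·) (fun _ _ => Rot.right l') _ _ hr)

theorem Rot.sub_of_lt {t₁ t₂ : BinTree} (h : Rot t₁ t₂) {o a b : ℕ} (hab : a < b)
    (hs : t₂.sub o a b) : t₁.sub o a b := by
  induction h generalizing o with
  | base A B C => grind [sub, size]
  | left r h ih => have := h.size_eq; grind [sub]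
  | right l h ih => have := h.size_eq; grind [sub]

theorem Rot.sub_of_gt {t₁ t₂ : BinTree} (h : Rot t₁ t₂) {o a b : ℕ} (hab : b < a)
    (hs : t₁.sub o a b) : t₂.sub o a b := by
  induction h generalizing o with
  | base A B C => grind [sub, size]
  | left r h ih => have := h.size_eq; grind [sub]
  | right l h ih => have := h.size_eq; grind [sub]

theorem sub_of_tamariLE_of_lt {t₁ t₂ : BinTree} (h : tamariLE t₁ t₂) {o a b : ℕ} (hab : a < b) :
    t₂.sub o a b → t₁.sub o a b := by
  induction h with
  | refl => exact id
  | tail _ hr ih => exact ih ∘ hr.sub_of_lt hab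

theorem sub_of_tamariLE_of_gt {t₁ t₂ : BinTree} (h : tamariLE t₁ t₂) {o a b : ℕ} (hab : b < a) :
    t₁.sub o a b → t₂.sub o a b := by
  induction h with
  | refl => exact id
  | tail _ hr ih => exact hr.sub_of_gt hab ∘ ih

-- `node (lowerPart T o m) (upperPart T o m)` is `T` with the node labelled `m` rotated to the
-- root: its subtrees are the binary search trees of the labels of `T` below and above `m`.
def lowerPart : BinTree → ℕ → ℕ → BinTree
  | leaf, _, _ => leaf
  | node l r, o, m =>
      if m < o + l.size + 1 then lowerPart l o m
      else if m = o + l.size + 1 then l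
      else node l (lowerPart r (o + l.size + 1) m)

def upperPart : BinTree → ℕ → ℕ → BinTree
  | leaf, _, _ => leaf
  | node l r, o, m =>
      if m < o + l.size + 1 then node (upperPart l o m) r
      else if m = o + l.size + 1 then r
      else upperPart r (o + l.size + 1) m

theorem size_lowerPart {T : BinTree} {o m : ℕ} (hm : m ≤ o + T.size) :
    (lowerPart T o m).size = m - o - 1 := by
  induction T generalizing o with
  | leaf => simp only [size] at hm; simp only [lowerPart, size]; omega
  | node l r ihl ihr =>
    simp only [size] at hm
    simp only [lowerPart]
    split_ifs with h₁ h₂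
    · rw [ihl (by omega)]
    · omega
    · simp only [size]; rw [ihr (by omega)]; omega

theorem size_upperPart {T : BinTree} {o m : ℕ} (hm : o ≤ m) :
    (upperPart T o m).size = o + T.size - m := by
  induction T generalizing o with
  | leaf => simp only [upperPart, size]; omega
  | node l r ihl ihr =>
    simp only [upperPart, size]
    split_ifs with h₁ h₂
    · simp only [size]; rw [ihl hm]; omega
    · omega
    · rw [ihr (by omega)]; omega

theorem sub_lowerPart_iff {T : BinTree} {o m a b : ℕ} (hm : m ≤ o + T.size) (ha : a < m)
    (hb : b < m) : (lowerPart T o m).sub o a b ↔ T.sub o a b := by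
  induction T generalizing o with
  | leaf => simp only [lowerPart]
  | node l r ihl ihr =>
    simp only [size] at hm
    simp only [lowerPart]
    split_ifs with h₁ h₂
    · have := @sub_bounds r
      rw [ihl (by omega)]
      grind [sub]
    · have := @sub_bounds r
      grind [sub]
    · have := size_lowerPart (T := r) (o := o + l.size + 1) (m := m) (by omega)
      have := @ihr (o + l.size + 1) (by omega)
      grind [sub, size]

theorem sub_upperPart_iff {T : BinTree} {o m a b : ℕ} (hm : o ≤ m) (ha : m < a)
    (hb : m < b) : (upperPart T o m).sub m a b ↔ T.sub o a b := by
  induction T generalizing o with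
  | leaf => simp only [upperPart, sub]
  | node l r ihl ihr =>
    simp only [upperPart]
    split_ifs with h₁ h₂
    · have := @sub_bounds l
      have := size_upperPart (T := l) hm
      have := ihl hm
      grind [sub, size]
    · have := @sub_bounds l
      grind [sub]
    · have := @sub_bounds l
      have := @ihr (o + l.size + 1) (by omega)
      grind [sub]

theorem node_lowerPart_upperPart_le {T : BinTree} {o m : ℕ} (hom : o < m) (hm : m ≤ o + T.size)
    (hmax : ∀ c, m < c → ¬ T.sub o m c) :
    tamariLE (node (lowerPart T o m) (upperPart T o m)) T := by
  induction T generalizing o with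
  | leaf => simp only [size] at hm; omega
  | node l r ihl ihr =>
    simp only [size] at hm
    simp only [lowerPart, upperPart]
    split_ifs with h₁ h₂
    · exact absurd (Or.inl ⟨rfl, hom, by omega⟩) (hmax _ h₁)
    · exact .refl
    · have hr := ihr (o := o + l.size + 1) (by omega) (by omega)
        fun c hc hs => hmax c hc (Or.inr (Or.inr hs))
      exact .head (Rot.base _ _ _) (tamariLE_node .refl hr)

theorem le_node_lowerPart_upperPart {T : BinTree} {o m : ℕ} (hom : o < m) (hm : m ≤ o + T.size)
    (hmin : ∀ c, c < m → ¬ T.sub o m c) :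
    tamariLE T (node (lowerPart T o m) (upperPart T o m)) := by
  induction T generalizing o with
  | leaf => simp only [size] at hm; omega
  | node l r ihl ihr =>
    simp only [size] at hm
    simp only [lowerPart, upperPart]
    split_ifs with h₁ h₂
    · have hl := ihl hom (by omega) fun c hc hs => hmin c hc (Or.inr (Or.inl hs))
      exact .tail (tamariLE_node hl .refl) (Rot.base _ _ _)
    · exact .refl
    · exact absurd (Or.inl ⟨rfl, hom, by omega⟩) (hmin _ (by omega))

variable {ρ : ℕ → ℕ → Prop} {T : BinTree} {o n m : ℕ} {σ : List ℕ}

theorem isLinExtOn_filter_lowerPart (h : IsLinExtOn o n (fun a b => ρ a b ∧ T.sub o a b) σ)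
    (hT : T.size = n) (hm : m ≤ o + n) :
    IsLinExtOn o (m - o - 1) (fun a b => ρ a b ∧ (lowerPart T o m).sub o a b)
      (σ.filter (· < m)) := by
  refine h.filter _ (fun x => by simp only [decide_eq_true_eq]; omega) fun a b ⟨hab, hs⟩ => ?_
  have := sub_bounds hs
  rw [size_lowerPart (by omega)] at this
  rw [sub_lowerPart_iff (by omega) (by omega) (by omega)] at hs
  exact ⟨⟨hab, hs⟩, by simp only [decide_eq_true_eq]; omega⟩

theorem isLinExtOn_filter_upperPart (h : IsLinExtOn o n (fun a b => ρ a b ∧ T.sub o a b) σ)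
    (hm : o ≤ m) :
    IsLinExtOn m (o + n - m) (fun a b => ρ a b ∧ (upperPart T o m).sub m a b)
      (σ.filter (m < ·)) := by
  refine h.filter _ (fun x => by simp only [decide_eq_true_eq]; omega) fun a b ⟨hab, hs⟩ => ?_
  have := sub_bounds hs
  rw [sub_upperPart_iff hm (by omega) (by omega)] at hs
  exact ⟨⟨hab, hs⟩, by simp only [decide_eq_true_eq]; omega⟩

theorem isLinExtOn_node_of_filter {r : ℕ → ℕ → Prop} {τ : List ℕ} {L U : BinTree}
    (h : IsLinExtOn o n r (τ ++ [m])) (hL : L.size = m - o - 1) (hU : U.size = o + n - m)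
    (hLσ : IsLinExtOn o (m - o - 1) (L.sub o) ((τ ++ [m]).filter (· < m)))
    (hUσ : IsLinExtOn m (o + n - m) (U.sub m) ((τ ++ [m]).filter (m < ·))) :
    IsLinExtOn o n ((node L U).sub o) (τ ++ [m]) := by
  obtain ⟨hom, hmn⟩ : o < m ∧ m ≤ o + n := (h.2.1 m).1 (by simp)
  refine ⟨h.1, h.2.1, fun a b hab hne => ?_⟩
  rcases hab with ⟨rfl, ha₁, ha₂⟩ | hs | hs
  · have haτ : a ∈ τ := by
      have := (h.2.1 a).2 (by omega)
      simp only [List.mem_append, List.mem_singleton] at this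
      exact this.resolve_right (by omega)
    rw [show o + L.size + 1 = m by omega]
    exact (List.singleton_sublist.2 haτ).append (List.Sublist.refl [m])
  · exact (hLσ.2.2 a b hs hne).trans List.filter_sublist
  · rw [show o + L.size + 1 = m by omega] at hs
    exact (hUσ.2.2 a b hs hne).trans List.filter_sublist

-- `inc T` is the case `ρ = (· < ·)`, `R = tamariLE`;
-- `dec T` is the case `ρ = (· > ·)`, `R = flip tamariLE`.
theorem exists_isLinExtOn_sub {R : BinTree → BinTree → Prop} (hrefl : ∀ T, R T T)
    (htrans : ∀ {T₁ T₂ T₃}, R T₁ T₂ → R T₂ T₃ → R T₁ T₃)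
    (hnode : ∀ {l l' r r'}, R l l' → R r r' → R (node l r) (node l' r'))
    (hsplit : ∀ T o m, o < m → m ≤ o + T.size → (∀ c, m ≠ c → ρ m c → ¬ T.sub o m c) →
      R (node (lowerPart T o m) (upperPart T o m)) T)
    (hT : T.size = n) (hσ : IsLinExtOn o n (fun a b => ρ a b ∧ T.sub o a b) σ) :
    ∃ T', T'.size = n ∧ R T' T ∧ IsLinExtOn o n (T'.sub o) σ := by
  induction n using Nat.strong_induction_on generalizing T o σ with
  | _ n ih =>
  rcases σ.eq_nil_or_concat' with rfl | ⟨τ, m, rfl⟩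
  · refine ⟨T, hT, hrefl T, hσ.1, hσ.2.1, fun a b hab => ?_⟩
    have := (hσ.2.1 (o + 1)).not.1 List.not_mem_nil
    have := sub_bounds hab
    omega
  obtain ⟨hom, hmn⟩ : o < m ∧ m ≤ o + n := (hσ.2.1 m).1 (by simp)
  have hmτ : m ∉ τ := fun h => (List.nodup_append.1 hσ.1).2.2 m h m (by simp) rfl
  have hmax (c : ℕ) (hne : m ≠ c) (hρ : ρ m c) : ¬ T.sub o m c := fun hs =>
    List.not_pair_sublist_append_singleton hmτ (hσ.2.2 m c ⟨hρ, hs⟩ hne)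
  obtain ⟨L, hL, hLR, hLσ⟩ := ih (m - o - 1) (by omega) (size_lowerPart (by omega))
    (isLinExtOn_filter_lowerPart hσ hT hmn)
  obtain ⟨U, hU, hUR, hUσ⟩ := ih (o + n - m) (by omega) (hT ▸ size_upperPart hom.le)
    (isLinExtOn_filter_upperPart hσ hom.le)
  refine ⟨node L U, by simp only [size]; omega, htrans (hnode hLR hUR) ?_,
    isLinExtOn_node_of_filter hσ hL (by omega) hLσ hUσ⟩
  exact hsplit T o m hom (by omega) hmax

theorem sub_zero_bounds {a b : ℕ} (hs : T.sub 0 a b) : 0 < b ∧ b ≤ T.size := by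
  have := sub_bounds hs
  omega

theorem isLinExt_incRel_iff (hT : T.size = n) :
    IsLinExt n (incRel T) σ ↔
      ∃ T', T'.size = n ∧ tamariLE T' T ∧ IsLinExt n (fun a b => T'.sub 0 a b) σ := by
  constructor
  · intro h
    rw [isLinExt_iff_isLinExtOn fun a b hab => hT ▸ sub_zero_bounds hab.2] at h
    obtain ⟨T', hT', hle, hσ⟩ := exists_isLinExtOn_sub (ρ := (· < ·)) (fun _ => .refl) .trans
      tamariLE_node (fun _ _ _ hom hm hmax => node_lowerPart_upperPart_le hom hm
        fun c hc => hmax c hc.ne hc) hT h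
    exact ⟨T', hT', hle, (isLinExt_iff_isLinExtOn fun a b => hT' ▸ sub_zero_bounds).2 hσ⟩
  · rintro ⟨T', -, hle, hσ⟩
    exact hσ.mono fun a b h => sub_of_tamariLE_of_lt hle h.1 h.2

theorem isLinExt_decRel_iff (hT : T.size = n) :
    IsLinExt n (decRel T) σ ↔
      ∃ T', T'.size = n ∧ tamariLE T T' ∧ IsLinExt n (fun a b => T'.sub 0 a b) σ := by
  constructor
  · intro h
    rw [isLinExt_iff_isLinExtOn fun a b hab => hT ▸ sub_zero_bounds hab.2] at h
    obtain ⟨T', hT', hle, hσ⟩ := exists_isLinExtOn_sub (ρ := (· > ·)) (R := flip tamariLE)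
      (fun _ => .refl) (fun h₁ h₂ => h₂.trans h₁)
      tamariLE_node (fun _ _ _ hom hm hmin => le_node_lowerPart_upperPart hom hm
        fun c hc => hmin c hc.ne' hc) hT h
    exact ⟨T', hT', hle, (isLinExt_iff_isLinExtOn fun a b => hT' ▸ sub_zero_bounds).2 hσ⟩
  · rintro ⟨T', -, hle, hσ⟩
    exact hσ.mono fun a b h => sub_of_tamariLE_of_gt hle h.1 h.2

end BinTree

/-- Linear extensions of `inc T` are exactly the members of sylvester classes
of trees `T' ≤ T` in the Tamari order; linear extensions of `dec T` are exactly
the members of sylvester classes of trees `T' ≥ T`. -/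
theorem stmt1 (n : ℕ) (T : BinTree) (hT : T.size = n) (σ : List ℕ) :
    (IsLinExt n (incRel T) σ ↔
      ∃ T' : BinTree, T'.size = n ∧ tamariLE T' T ∧
        IsLinExt n (fun a b => T'.sub 0 a b) σ) ∧
    (IsLinExt n (decRel T) σ ↔
      ∃ T' : BinTree, T'.size = n ∧ tamariLE T T' ∧
        IsLinExt n (fun a b => T'.sub 0 a b) σ) :=
  ⟨BinTree.isLinExt_incRel_iff hT, BinTree.isLinExt_decRel_iff hT⟩
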